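/- Let r ≥ 3 be an integer, G a linear r-uniform hypergraph on n vertices, d an integer with 1 ≤ d ≤ δ(G)/2, and x ∈ V(G). Then there exist a positive integer m ≤ ⌈log n / log(δ(G)/d)⌉ and a subhypergraph H of G such that H has average degree at least d/4, every edge of H contains at least one vertex at distance exactly m from x, and no edge of H contains a vertex at distance less than m from x. -/

import Mathlib

/-- A hypergraph (edge set) is linear if any two distinct edges share at most one vertex. -/
def HLinear {V : Type*} [DecidableEq V] (E : Finset (Finset V)) : Prop :=
  ∀ e ∈ E, ∀ f ∈ E, e ≠ f → (e ∩ f).card ≤ 1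

/-- Degree of a vertex in a hypergraph: number of edges containing it. -/
def hdeg {V : Type*} [DecidableEq V] (E : Finset (Finset V)) (v : V) : ℕ :=
  (E.filter (fun e => v ∈ e)).card

/-- A linear path of length `t`: consecutive edges share exactly one vertex,
non-consecutive edges are disjoint. -/
def IsLinearPath {V : Type*} [DecidableEq V] (E : Finset (Finset V)) (t : ℕ)
    (P : Fin t → Finset V) : Prop :=
  (∀ i, P i ∈ E) ∧
  (∀ i j : Fin t, (i : ℕ) + 1 = j → (P i ∩ P j).card = 1) ∧
  (∀ i j : Fin t, (i : ℕ) + 1 < j → P i ∩ P j = ∅)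

/-- A linear cycle of length `t ≥ 3`: cyclically consecutive edges share exactly one
vertex, all other pairs of edges are disjoint. -/
def IsLinearCycle {V : Type*} [DecidableEq V] (E : Finset (Finset V)) (t : ℕ)
    (C : Fin t → Finset V) : Prop :=
  3 ≤ t ∧ (∀ i, C i ∈ E) ∧
  (∀ i j : Fin t, ((i : ℕ) + 1) % t = j → (C i ∩ C j).card = 1) ∧
  (∀ i j : Fin t, i ≠ j → ((i : ℕ) + 1) % t ≠ j → ((j : ℕ) + 1) % t ≠ i →
    C i ∩ C j = ∅)

/-- Distance between two vertices of a linear hypergraph: the length of a shortest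
linear path whose first edge contains `x` and whose last edge contains `y`
(`⊤` if there is no such path, `0` iff `x = y`). -/
noncomputable def hdist {V : Type*} [DecidableEq V] (E : Finset (Finset V)) (x y : V) : ℕ∞ :=
  if x = y then 0 else
  sInf ((fun t : ℕ => (t : ℕ∞)) ''
    {t | ∃ (ht : 0 < t) (P : Fin t → Finset V), IsLinearPath E t P ∧
      x ∈ P ⟨0, ht⟩ ∧ y ∈ P ⟨t - 1, Nat.sub_lt ht Nat.one_pos⟩})


/-!
Sort the vertices into the levels `L_i` of the distance from `x`, and each edge into the level of
its vertex closest to `x`. By the triangle inequality an edge of level `i` lies in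
`L_i ∪ L_{i+1}`, and every edge at a vertex of `L_{i+1}` has level `i` or `i + 1`. Call level `j`
dense if `d (|L_j| + |L_{j+1}|) ≤ 4 r e_j`, where `e_j` counts the edges of level `j`; its edges
then form the required subhypergraph. If none of the levels `1, …, i` is dense, counting degrees
on `L_i` gives `|L_{i+1}| ≥ (δ / d) |L_i|` (the base case `|L_1| ≥ 2δ` uses linearity and
`r ≥ 3`), so `|L_k| ≥ (δ / d)^k`. As `|L_k| ≤ n`, some level `j ≤ ⌈log n / log (δ / d)⌉` is dense,
and the first one has edges because all levels below it are nonempty.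
-/

open Finset

section Distance

variable {V : Type*} [DecidableEq V] {E : Finset (Finset V)}

theorem HLinear.eq_of_mem_of_mem (hlin : HLinear E) {e f : Finset V} (he : e ∈ E) (hf : f ∈ E)
    {u v : V} (huv : u ≠ v) (hue : u ∈ e) (hve : v ∈ e) (huf : u ∈ f) (hvf : v ∈ f) :
    e = f := by
  by_contra hef
  have hpair : ({u, v} : Finset V) ⊆ e ∩ f := by
    simp [insert_subset_iff, hue, hve, huf, hvf]
  have := (card_le_card hpair).trans (hlin e he f hf hef)
  rw [card_pair huv] at this
  omega

theorem IsLinearPath.take {t : ℕ} {P : Fin t → Finset V} (hP : IsLinearPath E t P) {k : ℕ}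
    (hk : k ≤ t) : IsLinearPath E k (fun j => P (Fin.castLE hk j)) :=
  ⟨fun _ => hP.1 _, fun _ _ hij => hP.2.1 _ _ hij, fun _ _ hij => hP.2.2 _ _ hij⟩

theorem IsLinearPath.extend {t : ℕ} {P : Fin t → Finset V} (hP : IsLinearPath E t P) {k : ℕ}
    (hk : k < t) {e : Finset V} (he : e ∈ E) (hlast : (P ⟨k, hk⟩ ∩ e).card = 1)
    (hdisj : ∀ (j : ℕ) (hj : j < k), P ⟨j, by omega⟩ ∩ e = ∅) :
    IsLinearPath E (k + 2) (fun j => if h : (j : ℕ) < k + 1 then P ⟨j, by omega⟩ else e) := by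
  obtain ⟨hmem, hconsec, hfar⟩ := hP
  refine ⟨fun i => ?_, fun i j hij => ?_, fun i j hij => ?_⟩
  · dsimp only
    split_ifs
    exacts [hmem _, he]
  · dsimp only
    by_cases hj : (j : ℕ) < k + 1
    · rw [dif_pos (by omega), dif_pos hj]
      exact hconsec _ _ hij
    · have hi : (i : ℕ) = k := by omega
      rw [dif_pos (by omega), dif_neg hj]
      simpa only [hi] using hlast
  · dsimp only
    by_cases hj : (j : ℕ) < k + 1
    · rw [dif_pos (by omega), dif_pos hj]
      exact hfar _ _ hij
    · rw [dif_pos (by omega), dif_neg hj]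
      exact hdisj i (by omega)

theorem hdist_le_of_isLinearPath {t : ℕ} {P : Fin t → Finset V} (hP : IsLinearPath E t P)
    (ht : 0 < t) {x y : V} (hx : x ∈ P ⟨0, ht⟩) (hy : y ∈ P ⟨t - 1, by omega⟩) :
    hdist E x y ≤ t := by
  unfold hdist
  split_ifs
  · exact zero_le
  · exact sInf_le ⟨t, ⟨ht, P, hP, hx, hy⟩, rfl⟩

theorem hdist_le_one {e : Finset V} (he : e ∈ E) {x y : V} (hx : x ∈ e) (hy : y ∈ e) :
    hdist E x y ≤ 1 := by
  have hP : IsLinearPath E 1 (fun _ => e) :=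
    ⟨fun _ => he, fun i j hij => by omega, fun i j hij => by omega⟩
  exact_mod_cast hdist_le_of_isLinearPath hP one_pos hx hy

theorem one_le_hdist {x y : V} (h : x ≠ y) : 1 ≤ hdist E x y := by
  unfold hdist
  rw [if_neg h]
  refine le_sInf ?_
  rintro _ ⟨t, ⟨ht, -⟩, rfl⟩
  exact Nat.one_le_cast.mpr ht

theorem hdist_eq_zero_iff {x y : V} : hdist E x y = 0 ↔ x = y := by
  refine ⟨fun h => ?_, fun h => by simp [hdist, h]⟩
  by_contra hne
  simpa [h] using one_le_hdist (E := E) hne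

theorem exists_isLinearPath_of_hdist_eq {x y : V} (h : x ≠ y) {t : ℕ} (hd : hdist E x y = t) :
    ∃ (ht : 0 < t) (P : Fin t → Finset V), IsLinearPath E t P ∧
      x ∈ P ⟨0, ht⟩ ∧ y ∈ P ⟨t - 1, by omega⟩ := by
  unfold hdist at hd
  rw [if_neg h] at hd
  set T := {t | ∃ (ht : 0 < t) (P : Fin t → Finset V), IsLinearPath E t P ∧
      x ∈ P ⟨0, ht⟩ ∧ y ∈ P ⟨t - 1, by omega⟩}
  rcases T.eq_empty_or_nonempty with hT | hT
  · simp [hT] at hd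
  · have hinf : sInf ((fun t : ℕ => (t : ℕ∞)) '' T) = ((sInf T : ℕ) : ℕ∞) :=
      le_antisymm (sInf_le ⟨_, Nat.sInf_mem hT, rfl⟩)
        (le_sInf (by rintro _ ⟨s, hs, rfl⟩; exact Nat.cast_le.mpr (Nat.sInf_le hs)))
    rw [hinf, Nat.cast_inj] at hd
    exact hd ▸ Nat.sInf_mem hT

/-- Following `P` up to its first edge that meets `e` and then stepping into `e` (unless that
edge is `e` itself) gives a linear path from `x` to every vertex of `e`. -/
theorem hdist_le_add_one_of_isLinearPath (hlin : HLinear E) {t : ℕ} {P : Fin t → Finset V}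
    (hP : IsLinearPath E t P) (ht : 0 < t) {x : V} (hx : x ∈ P ⟨0, ht⟩) {e : Finset V}
    (he : e ∈ E) (hmeet : ∃ i, (P i ∩ e).Nonempty) {u : V} (hu : u ∈ e) :
    hdist E x u ≤ t + 1 := by
  have hex : ∃ i, ∃ hi : i < t, (P ⟨i, hi⟩ ∩ e).Nonempty :=
    hmeet.elim fun i hi => ⟨i, i.2, hi⟩
  obtain ⟨hk, hmeetk⟩ := Nat.find_spec hex
  set k := Nat.find hex
  have hfirst : ∀ (j : ℕ) (hj : j < k), P ⟨j, by omega⟩ ∩ e = ∅ := fun j hj =>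
    not_nonempty_iff_eq_empty.mp fun hne => Nat.find_min hex hj ⟨_, hne⟩
  by_cases heq : P ⟨k, hk⟩ = e
  · have hpath := hdist_le_of_isLinearPath (hP.take (Nat.succ_le_of_lt hk)) (Nat.succ_pos k)
      hx (by simpa [heq] using hu)
    exact hpath.trans (by norm_cast; omega)
  · have hone : (P ⟨k, hk⟩ ∩ e).card = 1 :=
      le_antisymm (hlin _ (hP.1 _) e he heq) (card_pos.mpr hmeetk)
    have hpath := hdist_le_of_isLinearPath (hP.extend hk he hone hfirst) (by omega)
      (by simpa using hx) (by simpa using hu)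
    exact hpath.trans (by norm_cast; omega)

theorem hdist_le_hdist_add_one (hlin : HLinear E) {e : Finset V} (he : e ∈ E) (x : V) {u v : V}
    (hu : u ∈ e) (hv : v ∈ e) : hdist E x u ≤ hdist E x v + 1 := by
  by_cases hxv : x = v
  · subst hxv
    simpa [hdist_eq_zero_iff.mpr rfl] using hdist_le_one he hv hu
  induction h : hdist E x v using ENat.recTopCoe with
  | top => simp
  | coe t =>
    obtain ⟨ht, P, hP, hx, hvP⟩ := exists_isLinearPath_of_hdist_eq hxv h
    exact hdist_le_add_one_of_isLinearPath hlin hP ht hx he ⟨_, v, mem_inter.mpr ⟨hvP, hv⟩⟩ hu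

end Distance

theorem ENat.eq_or_eq_add_one_of_le_of_le {a : ℕ∞} {m : ℕ} (h₁ : m ≤ a) (h₂ : a ≤ m + 1) :
    a = m ∨ a = m + 1 := by
  lift a to ℕ using ne_top_of_le_ne_top (by simp) h₂
  norm_cast at *
  omega

section Levels

variable {V : Type*} [DecidableEq V] {E : Finset (Finset V)} {x : V}

noncomputable def edgeLevel (E : Finset (Finset V)) (x : V) (i : ℕ) : Finset (Finset V) :=
  {e ∈ E | e.inf (hdist E x) = i}

theorem mem_edgeLevel {i : ℕ} {e : Finset V} :
    e ∈ edgeLevel E x i ↔ e ∈ E ∧ e.inf (hdist E x) = i := by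
  simp [edgeLevel]

theorem edgeLevel_subset (i : ℕ) : edgeLevel E x i ⊆ E := filter_subset _ _

theorem le_hdist_of_mem_edgeLevel {m : ℕ} {e : Finset V} (he : e ∈ edgeLevel E x m) {u : V}
    (hu : u ∈ e) : (m : ℕ∞) ≤ hdist E x u :=
  (mem_edgeLevel.mp he).2 ▸ inf_le hu

theorem exists_hdist_eq_of_mem_edgeLevel {m : ℕ} {e : Finset V} (he : e ∈ edgeLevel E x m) :
    ∃ v ∈ e, hdist E x v = m := by
  have hinf := (mem_edgeLevel.mp he).2
  obtain ⟨v, hv, hv'⟩ := exists_mem_eq_inf e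
    (nonempty_iff_ne_empty.mpr fun h => by simp [h] at hinf) (hdist E x)
  exact ⟨v, hv, hv' ▸ hinf⟩

theorem mem_of_mem_edgeLevel_zero {e : Finset V} (he : e ∈ edgeLevel E x 0) : x ∈ e := by
  obtain ⟨v, hv, hdv⟩ := exists_hdist_eq_of_mem_edgeLevel he
  have hvx : hdist E x v = 0 := by exact_mod_cast hdv
  rwa [← hdist_eq_zero_iff.mp hvx] at hv

variable [Fintype V]

/-- The paper's `L_i(x)`. -/
noncomputable def distLevel (E : Finset (Finset V)) (x : V) (i : ℕ) : Finset V :=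
  {v | hdist E x v = i}

theorem mem_distLevel {i : ℕ} {v : V} : v ∈ distLevel E x i ↔ hdist E x v = i := by
  simp [distLevel]

theorem distLevel_zero : distLevel E x 0 = {x} := by
  ext v
  simp [mem_distLevel, hdist_eq_zero_iff, eq_comm]

theorem mem_distLevel_one {e : Finset V} (he : e ∈ E) (hx : x ∈ e) {v : V} (hv : v ∈ e)
    (hvx : v ≠ x) : v ∈ distLevel E x 1 :=
  mem_distLevel.mpr <| by exact_mod_cast le_antisymm (hdist_le_one he hx hv) (one_le_hdist hvx.symm)

theorem mem_distLevel_of_mem_edgeLevel (hlin : HLinear E) {m : ℕ} {e : Finset V}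
    (he : e ∈ edgeLevel E x m) {u : V} (hu : u ∈ e) :
    u ∈ distLevel E x m ∪ distLevel E x (m + 1) := by
  obtain ⟨w, hw, hdw⟩ := exists_hdist_eq_of_mem_edgeLevel he
  have hle := hdist_le_hdist_add_one hlin (mem_edgeLevel.mp he).1 x hu hw
  rw [hdw] at hle
  simp only [mem_union, mem_distLevel, Nat.cast_add, Nat.cast_one]
  exact ENat.eq_or_eq_add_one_of_le_of_le (le_hdist_of_mem_edgeLevel he hu) hle

theorem mem_edgeLevel_or_of_mem (hlin : HLinear E) {i : ℕ} {v : V}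
    (hv : v ∈ distLevel E x (i + 1)) {e : Finset V} (he : e ∈ E) (hve : v ∈ e) :
    e ∈ edgeLevel E x i ∪ edgeLevel E x (i + 1) := by
  have hdv := mem_distLevel.mp hv
  have hlow : (i : ℕ∞) ≤ e.inf (hdist E x) := Finset.le_inf fun u hu => by
    have := hdist_le_hdist_add_one hlin he x hve hu
    rw [hdv, Nat.cast_add, Nat.cast_one] at this
    exact (ENat.add_le_add_iff_right ENat.one_ne_top).mp this
  have hhigh : e.inf (hdist E x) ≤ ((i + 1 : ℕ) : ℕ∞) := hdv ▸ inf_le hve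
  simp only [mem_union, mem_edgeLevel, he, true_and]
  exact_mod_cast ENat.eq_or_eq_add_one_of_le_of_le hlow (by exact_mod_cast hhigh)

end Levels

theorem Finset.sum_card_inter_le_card_mul {α : Type*} [DecidableEq α] {s : Finset α}
    {t : Finset (Finset α)} {r : ℕ} (ht : ∀ e ∈ t, #e ≤ r) : ∑ e ∈ t, #(s ∩ e) ≤ #t * r :=
  (sum_le_card_nsmul t _ r fun e he => (card_le_card inter_subset_right).trans (ht e he)).trans_eq
    (smul_eq_mul _ _)

section Counting

variable {V : Type*} [Fintype V] [DecidableEq V] {E : Finset (Finset V)} {x : V}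

theorem card_distLevel_succ_mul_le (hlin : HLinear E) {δ : ℕ} (hδ : ∀ v, δ ≤ hdeg E v) (i : ℕ) :
    #(distLevel E x (i + 1)) * δ ≤
      ∑ e ∈ edgeLevel E x i, #(distLevel E x (i + 1) ∩ e) +
        ∑ e ∈ edgeLevel E x (i + 1), #(distLevel E x (i + 1) ∩ e) := by
  calc #(distLevel E x (i + 1)) * δ
      ≤ ∑ e ∈ edgeLevel E x i ∪ edgeLevel E x (i + 1), #(distLevel E x (i + 1) ∩ e) :=
        le_sum_card_inter fun v hv => (hδ v).trans <| card_le_card fun e he => by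
          obtain ⟨heE, hve⟩ := mem_filter.mp he
          exact mem_filter.mpr ⟨mem_edgeLevel_or_of_mem hlin hv heE hve, hve⟩
    _ ≤ _ := (Nat.le_add_right _ _).trans_eq sum_union_inter

theorem sum_card_inter_edgeLevel_zero_le (hlin : HLinear E) :
    ∑ e ∈ edgeLevel E x 0, #(distLevel E x 1 ∩ e) ≤ #(distLevel E x 1) := by
  refine (sum_card_inter_le fun v hv => card_le_one.mpr fun e he f hf => ?_).trans_eq (mul_one _)
  obtain ⟨he0, hve⟩ := mem_filter.mp he
  obtain ⟨hf0, hvf⟩ := mem_filter.mp hf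
  have hvx : v ≠ x := by
    rintro rfl
    simpa [hdist_eq_zero_iff.mpr rfl] using mem_distLevel.mp hv
  exact hlin.eq_of_mem_of_mem (edgeLevel_subset 0 he0) (edgeLevel_subset 0 hf0) hvx hve
    (mem_of_mem_edgeLevel_zero he0) hvf (mem_of_mem_edgeLevel_zero hf0)

/-- The at least `δ` edges at `x` are disjoint away from `x` and each contributes `r - 1 ≥ 2`
vertices to `L_1`. -/
theorem two_mul_le_card_distLevel_one (hlin : HLinear E) {r : ℕ} (hr : 3 ≤ r)
    (hcard : ∀ e ∈ E, #e = r) {δ : ℕ} (hδ : ∀ v, δ ≤ hdeg E v) :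
    2 * δ ≤ #(distLevel E x 1) := by
  set F := {e ∈ E | x ∈ e}
  have hdisj : (F : Set (Finset V)).PairwiseDisjoint (·.erase x) := by
    intro e he f hf hef
    obtain ⟨heE, hxe⟩ := mem_filter.mp he
    obtain ⟨hfE, hxf⟩ := mem_filter.mp hf
    exact disjoint_left.mpr fun w hwe hwf => hef <| hlin.eq_of_mem_of_mem heE hfE
      (ne_of_mem_erase hwe) (mem_of_mem_erase hwe) hxe (mem_of_mem_erase hwf) hxf
  calc 2 * δ ≤ #F * (r - 1) := by rw [mul_comm]; exact Nat.mul_le_mul (hδ x) (by omega)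
    _ = ∑ e ∈ F, #(e.erase x) := by
        rw [sum_congr rfl fun e he => by
          rw [card_erase_of_mem (mem_filter.mp he).2, hcard e (mem_filter.mp he).1],
          sum_const, smul_eq_mul]
    _ = #(F.biUnion (·.erase x)) := (card_biUnion hdisj).symm
    _ ≤ #(distLevel E x 1) := card_le_card fun v hv => by
        obtain ⟨e, he, hve⟩ := mem_biUnion.mp hv
        exact mem_distLevel_one (mem_filter.mp he).1 (mem_filter.mp he).2 (mem_of_mem_erase hve)
          (ne_of_mem_erase hve)

end Counting

section Growth

variable {V : Type*} [Fintype V] [DecidableEq V]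

def IsDenseLevel (E : Finset (Finset V)) (x : V) (r d j : ℕ) : Prop :=
  d * (#(distLevel E x j) + #(distLevel E x (j + 1))) ≤ 4 * (r * #(edgeLevel E x j))

variable {E : Finset (Finset V)} {x : V} {r δ d : ℕ}

theorem IsDenseLevel.mul_card_biUnion_le (hlin : HLinear E) {m : ℕ}
    (hm : IsDenseLevel E x r d m) :
    (d / 4 : ℝ) * #((edgeLevel E x m).biUnion id) ≤ r * #(edgeLevel E x m) := by
  have hsub : (edgeLevel E x m).biUnion id ⊆ distLevel E x m ∪ distLevel E x (m + 1) :=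
    fun u hu => by
      obtain ⟨e, he, hue⟩ := mem_biUnion.mp hu
      exact mem_distLevel_of_mem_edgeLevel hlin he hue
  have hnat : d * #((edgeLevel E x m).biUnion id) ≤ 4 * (r * #(edgeLevel E x m)) :=
    (Nat.mul_le_mul_left d ((card_le_card hsub).trans (card_union_le _ _))).trans hm
  have hreal : (d : ℝ) * #((edgeLevel E x m).biUnion id) ≤ 4 * (r * #(edgeLevel E x m)) := by
    exact_mod_cast hnat
  linarith

/-- Count degrees on `L_i`: its edges have levels `i - 1` and `i`, and the sparseness of these
levels bounds both parts (for `i = 1` the part of level `0` is bounded by linearity instead). -/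
theorem mul_card_distLevel_le_of_forall_not_isDenseLevel (hlin : HLinear E) (hr : 3 ≤ r)
    (hcard : ∀ e ∈ E, #e = r) (hδ : ∀ v, δ ≤ hdeg E v) (hd : 1 ≤ d) (hdδ : 2 * d ≤ δ) {i : ℕ}
    (hsparse : ∀ j, 1 ≤ j → j ≤ i → ¬ IsDenseLevel E x r d j) :
    δ * #(distLevel E x i) ≤ d * #(distLevel E x (i + 1)) := by
  have hup (j : ℕ) (s : Finset V) : ∑ e ∈ edgeLevel E x j, #(s ∩ e) ≤ #(edgeLevel E x j) * r :=
    sum_card_inter_le_card_mul fun e he => (hcard e (edgeLevel_subset j he)).le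
  induction i with
  | zero =>
    have hL₁ := two_mul_le_card_distLevel_one (x := x) hlin hr hcard hδ
    rw [distLevel_zero, card_singleton, mul_one]
    nlinarith
  | succ i ih =>
    have hsparse₁ := hsparse (i + 1) le_add_self le_rfl
    simp only [IsDenseLevel, not_le] at hsparse₁
    have hcount := card_distLevel_succ_mul_le (x := x) hlin hδ i
    have hup₁ := hup (i + 1) (distLevel E x (i + 1))
    rcases i with _ | i
    · have hdown := sum_card_inter_edgeLevel_zero_le (x := x) hlin
      have hcoef := Nat.mul_le_mul_right #(distLevel E x 1) (show 4 + d ≤ 3 * δ by omega)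
      simp only [zero_add] at hsparse₁ hcount hup₁ ⊢
      nlinarith
    · have hsparse₀ := hsparse (i + 1) le_add_self (by omega)
      simp only [IsDenseLevel, not_le] at hsparse₀
      have hgrow := ih fun j hj₁ hj₂ => hsparse j hj₁ (by omega)
      have hdown := hup (i + 1) (distLevel E x (i + 1 + 1))
      have ha := Nat.mul_le_mul_right #(distLevel E x (i + 1)) hdδ
      have hb := Nat.mul_le_mul_right #(distLevel E x (i + 1 + 1)) hdδ
      nlinarith

theorem pow_le_pow_mul_card_distLevel (hlin : HLinear E) (hr : 3 ≤ r)
    (hcard : ∀ e ∈ E, #e = r) (hδ : ∀ v, δ ≤ hdeg E v) (hd : 1 ≤ d) (hdδ : 2 * d ≤ δ) {k : ℕ}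
    (hsparse : ∀ j, 1 ≤ j → j < k → ¬ IsDenseLevel E x r d j) :
    δ ^ k ≤ d ^ k * #(distLevel E x k) := by
  induction k with
  | zero => simp [distLevel_zero]
  | succ k ih =>
    have hgrow := mul_card_distLevel_le_of_forall_not_isDenseLevel (i := k) hlin hr hcard hδ hd hdδ
      fun j hj₁ hj₂ => hsparse j hj₁ (by omega)
    calc δ ^ (k + 1) = δ * δ ^ k := pow_succ' δ k
      _ ≤ δ * (d ^ k * #(distLevel E x k)) :=
          Nat.mul_le_mul_left δ (ih fun j hj₁ hj₂ => hsparse j hj₁ (by omega))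
      _ = d ^ k * (δ * #(distLevel E x k)) := by ring
      _ ≤ d ^ k * (d * #(distLevel E x (k + 1))) := Nat.mul_le_mul_left _ hgrow
      _ = d ^ (k + 1) * #(distLevel E x (k + 1)) := by ring

theorem exists_isDenseLevel (hlin : HLinear E) (hr : 3 ≤ r) (hcard : ∀ e ∈ E, #e = r)
    (hδ : ∀ v, δ ≤ hdeg E v) (hd : 1 ≤ d) (hdδ : 2 * d ≤ δ) {k : ℕ}
    (hk : d ^ k * Fintype.card V < δ ^ k) :
    ∃ m, 1 ≤ m ∧ m < k ∧ IsDenseLevel E x r d m ∧ (edgeLevel E x m).Nonempty := by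
  classical
  obtain ⟨m₀, hm₀, hm₀k, hdense₀⟩ : ∃ m, 1 ≤ m ∧ m < k ∧ IsDenseLevel E x r d m := by
    by_contra! hsparse
    have hpow := pow_le_pow_mul_card_distLevel (x := x) hlin hr hcard hδ hd hdδ hsparse
    have hcardV := Nat.mul_le_mul_left (d ^ k) (card_le_univ (distLevel E x k))
    omega
  have hex : ∃ m, 1 ≤ m ∧ IsDenseLevel E x r d m := ⟨m₀, hm₀, hdense₀⟩
  obtain ⟨hm, hdense⟩ := Nat.find_spec hex
  have hpow := pow_le_pow_mul_card_distLevel (k := Nat.find hex) hlin hr hcard hδ hd hdδ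
    fun j hj₁ hj₂ hj => Nat.find_min hex hj₂ ⟨hj₁, hj⟩
  have hL : 0 < #(distLevel E x (Nat.find hex)) :=
    Nat.pos_of_mul_pos_left (hpow.trans_lt' (Nat.pow_pos (by omega)))
  have hE : 0 < #(edgeLevel E x (Nat.find hex)) := by
    by_contra! h0
    rw [IsDenseLevel, Nat.le_zero.mp h0] at hdense
    nlinarith
  exact ⟨_, hm, (Nat.find_min' hex ⟨hm₀, hdense₀⟩).trans_lt hm₀k, hdense, card_pos.mp hE⟩

end Growth

theorem Real.lt_pow_toNat_ceil_logb_div_logb_add_one {a b : ℝ} (ha : 0 < a) (hb : 1 < b) :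
    a < b ^ (⌈Real.logb 2 a / Real.logb 2 b⌉.toNat + 1) := by
  have hρ : Real.logb 2 a / Real.logb 2 b = Real.logb b a := by
    simp only [Real.logb]
    rw [div_div_div_cancel_right₀ (Real.log_pos one_lt_two).ne', Real.log_div_log]
  have hceil : Real.logb b a ≤ (⌈Real.logb b a⌉.toNat : ℝ) := by
    calc Real.logb b a ≤ ⌈Real.logb b a⌉ := Int.le_ceil _
      _ ≤ ((⌈Real.logb b a⌉.toNat : ℤ) : ℝ) := by exact_mod_cast Int.self_le_toNat _
      _ = (⌈Real.logb b a⌉.toNat : ℝ) := Int.cast_natCast _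
  rw [hρ]
  calc a = b ^ Real.logb b a := (Real.rpow_logb (by linarith) hb.ne' ha).symm
    _ < b ^ ((⌈Real.logb b a⌉.toNat + 1 : ℕ) : ℝ) :=
        Real.rpow_lt_rpow_of_exponent_lt hb (by push_cast; linarith)
    _ = b ^ (⌈Real.logb b a⌉.toNat + 1) := Real.rpow_natCast _ _

/-- Lemma 3.2: finding a dense subhypergraph concentrated on a level
of the distance partition from a vertex x. -/
theorem stmt11 {V : Type*} [Fintype V] [DecidableEq V] (r : ℕ) (hr : 3 ≤ r)
    (E : Finset (Finset V)) (hcard : ∀ e ∈ E, e.card = r) (hlin : HLinear E)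
    (δ : ℕ) (hδ : ∀ v : V, δ ≤ hdeg E v)
    (d : ℕ) (hd1 : 1 ≤ d) (hd2 : (d : ℝ) ≤ (δ : ℝ) / 2) (x : V) :
    ∃ m : ℕ, 0 < m ∧
      (m : ℤ) ≤ ⌈Real.logb 2 (Fintype.card V) / Real.logb 2 ((δ : ℝ) / d)⌉ ∧
      ∃ E' : Finset (Finset V), E' ⊆ E ∧ E'.Nonempty ∧
        ((d : ℝ) / 4) * ((E'.biUnion id).card : ℝ) ≤ (r : ℝ) * E'.card ∧
        (∀ e ∈ E', ∃ v ∈ e, hdist E x v = (m : ℕ∞)) ∧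
        (∀ e ∈ E', ∀ v ∈ e, ∀ j : ℕ, j < m → hdist E x v ≠ (j : ℕ∞)) := by
  have hd : (0 : ℝ) < d := by exact_mod_cast hd1
  have hdδ : 2 * d ≤ δ := by
    have : ((2 * d : ℕ) : ℝ) ≤ δ := by push_cast; linarith
    exact_mod_cast this
  set M := ⌈Real.logb 2 (Fintype.card V) / Real.logb 2 ((δ : ℝ) / d)⌉.toNat
  have hM : d ^ (M + 1) * Fintype.card V < δ ^ (M + 1) := by
    have hlt := Real.lt_pow_toNat_ceil_logb_div_logb_add_one
      (by exact_mod_cast Fintype.card_pos_iff.mpr ⟨x⟩ : (0 : ℝ) < Fintype.card V)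
      ((one_lt_div hd).mpr (by linarith) : (1 : ℝ) < δ / d)
    rw [div_pow, lt_div_iff₀ (by positivity), mul_comm] at hlt
    exact_mod_cast hlt
  obtain ⟨m, hm, hmM, hdense, hne⟩ := exists_isDenseLevel (x := x) hlin hr hcard hδ hd1 hdδ hM
  refine ⟨m, hm, by omega, edgeLevel E x m, edgeLevel_subset m, hne,
    hdense.mul_card_biUnion_le hlin, fun e he => exists_hdist_eq_of_mem_edgeLevel he, ?_⟩
  intro e he v hv j hj hvj
  have hmv := le_hdist_of_mem_edgeLevel he hv
  rw [hvj, Nat.cast_le] at hmv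
  omega
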